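/- Linear PTAR are strictly less expressive than PTAR: every linear PTAR is a PTAR, and there is a PTAR-recognizable (indeed PTA-recognizable) tree language, namely L₃ = {γⁿ(σ(γⁿ#,γⁿ#)) | n ∈ ℕ}, that no linear PTAR recognizes. -/

import Mathlib

/-! ## Trees over ranked alphabets: a symbol `s` has `ar s` children -/

inductive GTree (S : Type) (ar : S → ℕ) : Type where
  | node (s : S) (c : Fin (ar s) → GTree S ar) : GTree S ar

namespace GTree
variable {S : Type} {ar : S → ℕ}

/-- The height of a tree (leaves have height 0). -/
def height : GTree S ar → ℕ
  | node _ c => Finset.univ.sup fun i => height (c i) + 1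

/-- The size (number of positions) of a tree. -/
def size : GTree S ar → ℕ
  | node _ c => 1 + ∑ i, size (c i)

/-- The subtree at a position (a list of child indices), if the position exists. -/
def subAt : GTree S ar → List ℕ → Option (GTree S ar)
  | t, [] => some t
  | node s c, i :: ρ => if h : i < ar s then subAt (c ⟨i, h⟩) ρ else none

/-- The list of path words of all complete (root-to-leaf) paths. -/
def pathWords : GTree S ar → List (List S)
  | node s c =>
    if _ : ar s = 0 then [[s]]
    else ((List.finRange (ar s)).map fun i => (pathWords (c i)).map (s :: ·)).flatten

end GTree

/-! ## Semilinear sets -/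

def IsLinearSetN {m : ℕ} (C : Set (Fin m → ℕ)) : Prop :=
  ∃ (l : ℕ) (d0 : Fin m → ℕ) (d : Fin l → Fin m → ℕ),
    C = {v | ∃ c : Fin l → ℕ, v = d0 + ∑ i, c i • d i}

def IsSemilinear {m : ℕ} (C : Set (Fin m → ℕ)) : Prop :=
  ∃ (k : ℕ) (L : Fin k → Set (Fin m → ℕ)), (∀ i, IsLinearSetN (L i)) ∧ C = ⋃ i, L i

/-! ## Non-global Parikh tree automata with reset (PTAR) -/

/-- Update of a counter vector: add `d`, or reset to `0` for `↺` (`none`). -/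
def updW {m : ℕ} (w : Fin m → ℕ) : Option (Fin m → ℕ) → Fin m → ℕ
  | some d => w + d
  | none => 0

structure PTAR (S : Type) (ar : S → ℕ) (m : ℕ) where
  Q : Type
  finQ : Fintype Q
  init : Q
  D : Finset (Fin m → ℕ)
  trans : Q → (s : S) → (Fin (ar s) → Q × Option (Fin m → ℕ)) → Prop
  transD : ∀ q s f, trans q s f → ∀ i d, (f i).2 = some d → d ∈ D
  C : Set (Fin m → ℕ)
  semiC : IsSemilinear C

inductive PTAR.Acc {S : Type} {ar : S → ℕ} {m : ℕ} (A : PTAR S ar m) :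
    A.Q → (Fin m → ℕ) → GTree S ar → Prop where
  | node {q : A.Q} {w : Fin m → ℕ} {s : S} {f : Fin (ar s) → A.Q × Option (Fin m → ℕ)}
      {c : Fin (ar s) → GTree S ar}
      (ht : A.trans q s f) (hC : ar s = 0 → w ∈ A.C)
      (hc : ∀ i, PTAR.Acc A (f i).1 (updW w (f i).2) (c i)) :
      PTAR.Acc A q w (.node s c)

def PTAR.Lang {S : Type} {ar : S → ℕ} {m : ℕ} (A : PTAR S ar m) : Set (GTree S ar) :=
  {ξ | A.Acc A.init 0 ξ}

/-- A PTAR is linear if every transition passes the counter configuration to at most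
one child; all other children are reset. -/
def PTAR.IsLinear {S : Type} {ar : S → ℕ} {m : ℕ} (A : PTAR S ar m) : Prop :=
  ∀ q s f, A.trans q s f → ∀ i j, (f i).2 ≠ none → (f j).2 ≠ none → i = j

/-! ## The ranked alphabet {σ⁽²⁾, γ⁽¹⁾, #⁽⁰⁾} -/

inductive Sg : Type where | sig | gam | hash
  deriving DecidableEq

def arG : Sg → ℕ
  | .sig => 2
  | .gam => 1
  | .hash => 0

instance : Fintype Sg :=
  ⟨⟨{Sg.sig, Sg.gam, Sg.hash}, by decide⟩, fun x => by cases x <;> decide⟩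

def hashT : GTree Sg arG := .node .hash ![]
def gamT (t : GTree Sg arG) : GTree Sg arG := .node .gam ![t]
def sigT (l r : GTree Sg arG) : GTree Sg arG := .node .sig ![l, r]

/-- γⁿ(t) -/
def gpow : ℕ → GTree Sg arG → GTree Sg arG
  | 0, t => t
  | n + 1, t => gamT (gpow n t)

/-- L_γγ = {σ(γⁿ#, γⁿ#) | n ∈ ℕ} -/
def Lgg : Set (GTree Sg arG) := {ξ | ∃ n, ξ = sigT (gpow n hashT) (gpow n hashT)}

/-- L₃ = {γⁿ(σ(γⁿ#, γⁿ#)) | n ∈ ℕ} -/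
def L3 : Set (GTree Sg arG) := {ξ | ∃ n, ξ = gpow n (sigT (gpow n hashT) (gpow n hashT))}

/-!
A PTA for L₃ counts the `γ`s above `σ` in one coordinate and those below `σ` in the other,
and every leaf checks that the two coordinates agree.

Conversely, at the `σ` of `γⁿ(σ(γⁿ#, γⁿ#))` a linear PTAR resets one of the two
children, which is therefore read from counter `0` in some state `rₙ`. Any tree accepted
from `(rₙ, 0)` can be spliced into that branch, so `rₙ` accepts `γᵏ#` only for `k = n`.
Hence `n ↦ rₙ` is injective, which is impossible for a finite state set.
-/

theorem node_gam_eq (c : Fin (arG Sg.gam) → GTree Sg arG) :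
    GTree.node Sg.gam c = gamT (c (0 : Fin 1)) :=
  congrArg _ (FinVec.etaExpand_eq (m := 1) c).symm

theorem node_sig_eq (c : Fin (arG Sg.sig) → GTree Sg arG) :
    GTree.node Sg.sig c = sigT (c (0 : Fin 2)) (c (1 : Fin 2)) :=
  congrArg _ (FinVec.etaExpand_eq (m := 2) c).symm

theorem node_hash_eq (c : Fin (arG Sg.hash) → GTree Sg arG) : GTree.node Sg.hash c = hashT :=
  congrArg _ (FinVec.etaExpand_eq (m := 0) c).symm

theorem node_gam_update (u t : GTree Sg arG) :
    GTree.node Sg.gam (Function.update ![u] (0 : Fin 1) t) = gamT t :=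
  congrArg _ (funext fun j => by obtain rfl := Subsingleton.elim (α := Fin 1) j 0; rfl)

theorem node_sig_update_zero (a b t : GTree Sg arG) :
    GTree.node Sg.sig (Function.update ![a, b] (0 : Fin 2) t) = sigT t b :=
  congrArg _ (funext (Fin.forall_fin_two.2 ⟨rfl, rfl⟩))

theorem node_sig_update_one (a b t : GTree Sg arG) :
    GTree.node Sg.sig (Function.update ![a, b] (1 : Fin 2) t) = sigT a t :=
  congrArg _ (funext (Fin.forall_fin_two.2 ⟨rfl, rfl⟩))

theorem gamT_injective : Function.Injective gamT := fun _ _ h => by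
  injection h with _ h
  exact congrFun h (0 : Fin 1)

theorem sigT_inj {a b a' b' : GTree Sg arG} (h : sigT a b = sigT a' b') : a = a' ∧ b = b' := by
  injection h with _ h
  exact ⟨congrFun h (0 : Fin 2), congrFun h (1 : Fin 2)⟩

theorem sigT_ne_gamT (a b u : GTree Sg arG) : sigT a b ≠ gamT u := nofun

theorem hashT_ne_gamT (u : GTree Sg arG) : hashT ≠ gamT u := nofun

theorem gpow_eq_gpow_iff {n k : ℕ} {s t : GTree Sg arG} (hs : ∀ u, s ≠ gamT u)
    (ht : ∀ u, t ≠ gamT u) : gpow n s = gpow k t ↔ n = k ∧ s = t := by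
  induction n generalizing k with
  | zero =>
    cases k with
    | zero => simp [gpow]
    | succ k => exact iff_of_false (hs _) (by omega)
  | succ n ih =>
    cases k with
    | zero => exact iff_of_false (fun h => ht _ h.symm) (by omega)
    | succ k => simp only [gpow, gamT_injective.eq_iff, ih, add_left_inj]

theorem gpow_sigT_mem_L3 {n a b : ℕ} :
    gpow n (sigT (gpow a hashT) (gpow b hashT)) ∈ L3 ↔ a = n ∧ b = n := by
  constructor
  · rintro ⟨k, hk⟩
    obtain ⟨rfl, hab⟩ := (gpow_eq_gpow_iff (sigT_ne_gamT _ _) (sigT_ne_gamT _ _)).1 hk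
    obtain ⟨ha, hb⟩ := sigT_inj hab
    exact ⟨((gpow_eq_gpow_iff hashT_ne_gamT hashT_ne_gamT).1 ha).1,
      ((gpow_eq_gpow_iff hashT_ne_gamT hashT_ne_gamT).1 hb).1⟩
  · rintro ⟨rfl, rfl⟩
    exact ⟨_, rfl⟩

namespace PTAR

section

variable {S : Type} {ar : S → ℕ} {m : ℕ} {A : PTAR S ar m}

theorem Acc.exists_trans_update {q : A.Q} {w : Fin m → ℕ} {s : S}
    {c : Fin (ar s) → GTree S ar} (h : A.Acc q w (.node s c)) :
    ∃ f, A.trans q s f ∧ ∀ i, A.Acc (f i).1 (updW w (f i).2) (c i) ∧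
      ∀ t, A.Acc (f i).1 (updW w (f i).2) t → A.Acc q w (.node s (Function.update c i t)) := by
  obtain ⟨ht, hC, hc⟩ := h
  refine ⟨_, ht, fun i => ⟨hc i, fun t hti => .node ht hC fun j => ?_⟩⟩
  rcases eq_or_ne j i with rfl | hji
  · simpa using hti
  · simpa [Function.update_of_ne hji] using hc j

theorem IsLinear.exists_reset_update (hA : A.IsLinear) {q : A.Q} {w : Fin m → ℕ} {s : S}
    {c : Fin (ar s) → GTree S ar} (h : A.Acc q w (.node s c)) {i j : Fin (ar s)} (hij : i ≠ j) :
    ∃ k, (k = i ∨ k = j) ∧ ∃ r, A.Acc r 0 (c k) ∧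
      ∀ t, A.Acc r 0 t → A.Acc q w (.node s (Function.update c k t)) := by
  obtain ⟨f, ht, hf⟩ := h.exists_trans_update
  have reset (k) (hk : (f k).2 = none) :
      ∃ r, A.Acc r 0 (c k) ∧
        ∀ t, A.Acc r 0 t → A.Acc q w (.node s (Function.update c k t)) :=
    ⟨(f k).1, by simpa [hk, updW] using hf k⟩
  by_cases hi : (f i).2 = none
  · exact ⟨i, .inl rfl, reset i hi⟩
  · exact ⟨j, .inr rfl, reset j (not_not.1 fun hj => hij (hA q s f ht i j hi hj))⟩

end

variable {m : ℕ} {A : PTAR Sg arG m}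

theorem Acc.exists_gpow_context {q : A.Q} {w : Fin m → ℕ} {k : ℕ} {t : GTree Sg arG}
    (h : A.Acc q w (gpow k t)) :
    ∃ q' w', A.Acc q' w' t ∧ ∀ t', A.Acc q' w' t' → A.Acc q w (gpow k t') := by
  induction k generalizing q w with
  | zero => exact ⟨q, w, h, fun _ => id⟩
  | succ k ih =>
    obtain ⟨f, -, hf⟩ := Acc.exists_trans_update h
    obtain ⟨hk, hreplace⟩ := hf (0 : Fin 1)
    obtain ⟨q', w', ht, hctx⟩ := ih hk
    refine ⟨q', w', ht, fun t' ht' => ?_⟩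
    rw [gpow, ← node_gam_update (gpow k t)]
    exact hreplace _ (hctx t' ht')

theorem IsLinear.exists_reset_branch (hA : A.IsLinear) {q : A.Q} {w : Fin m → ℕ} {n : ℕ}
    {a b : GTree Sg arG} (h : A.Acc q w (gpow n (sigT a b))) :
    ∃ r, (A.Acc r 0 a ∧ ∀ t, A.Acc r 0 t → A.Acc q w (gpow n (sigT t b))) ∨
      (A.Acc r 0 b ∧ ∀ t, A.Acc r 0 t → A.Acc q w (gpow n (sigT a t))) := by
  obtain ⟨q', w', hroot, hctx⟩ := h.exists_gpow_context
  obtain ⟨k, rfl | rfl, r, hr, hreplace⟩ :=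
    hA.exists_reset_update hroot (by decide : (0 : Fin 2) ≠ 1)
  · exact ⟨r, .inl ⟨hr, fun t ht => hctx _ (node_sig_update_zero a b t ▸ hreplace t ht)⟩⟩
  · exact ⟨r, .inr ⟨hr, fun t ht => hctx _ (node_sig_update_one a b t ▸ hreplace t ht)⟩⟩

end PTAR

theorem not_exists_linear_lang_eq_L3 :
    ¬ ∃ (m : ℕ) (A : PTAR Sg arG m), A.IsLinear ∧ A.Lang = L3 := by
  rintro ⟨m, A, hA, hL⟩
  replace hL : ∀ t, A.Acc A.init 0 t ↔ t ∈ L3 := Set.ext_iff.1 hL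
  have := A.finQ
  have hstate (n : ℕ) : ∃ r : A.Q, A.Acc r 0 (gpow n hashT) ∧
      ∀ k, A.Acc r 0 (gpow k hashT) → k = n := by
    obtain ⟨r, ⟨hr, hreplace⟩ | ⟨hr, hreplace⟩⟩ :=
      hA.exists_reset_branch ((hL _).2 ⟨n, rfl⟩)
    · exact ⟨r, hr, fun k hk => (gpow_sigT_mem_L3.1 ((hL _).1 (hreplace _ hk))).1⟩
    · exact ⟨r, hr, fun k hk => (gpow_sigT_mem_L3.1 ((hL _).1 (hreplace _ hk))).2⟩
  choose r hr hdet using hstate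
  obtain ⟨n, n', hne, hrr⟩ := Finite.exists_ne_map_eq_of_infinite r
  exact hne (hdet n' n (hrr ▸ hr n))

theorem isSemilinear_setOf_eq : IsSemilinear {v : Fin 2 → ℕ | v 0 = v 1} := by
  refine ⟨1, fun _ => {v | v 0 = v 1}, fun _ => ⟨1, 0, fun _ => ![1, 1], ?_⟩,
    (Set.iUnion_const _).symm⟩
  ext v
  simp only [Set.mem_ofPred_eq, zero_add, Finset.univ_unique, Finset.sum_singleton]
  constructor
  · intro h
    exact ⟨fun _ => v 0, funext (Fin.forall_fin_two.2 ⟨by simp, by simp [h]⟩)⟩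
  · rintro ⟨c, rfl⟩
    simp

def l3PTA : PTAR Sg arG 2 where
  Q := Bool
  finQ := inferInstance
  init := false
  D := {![1, 0], ![0, 1], 0}
  trans q s f :=
    match s with
    | .gam => (q = false ∧ f = fun _ => (false, some ![1, 0])) ∨
              (q = true ∧ f = fun _ => (true, some ![0, 1]))
    | .sig => q = false ∧ f = fun _ => (true, some 0)
    | .hash => q = true
  transD := by
    rintro q (_ | _ | _) f ht i d hd
    · obtain ⟨_, rfl⟩ := ht; simp_all
    · rcases ht with ⟨_, rfl⟩ | ⟨_, rfl⟩ <;> simp_all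
    · exact i.elim0
  C := {v | v 0 = v 1}
  semiC := isSemilinear_setOf_eq

theorem l3PTA_trans_ne_none (q : Bool) (s : Sg) (f : Fin (arG s) → Bool × Option (Fin 2 → ℕ))
    (ht : l3PTA.trans q s f) (i : Fin (arG s)) : (f i).2 ≠ none := by
  cases s with
  | gam => rcases ht with ⟨_, rfl⟩ | ⟨_, rfl⟩ <;> simp
  | sig => obtain ⟨_, rfl⟩ := ht; simp
  | hash => exact i.elim0

theorem l3PTA_acc_true_iff {w : Fin 2 → ℕ} {t : GTree Sg arG} :
    l3PTA.Acc true w t ↔ ∃ k, t = gpow k hashT ∧ w 0 = w 1 + k := by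
  refine ⟨fun h => ?_, ?_⟩
  · suffices ∀ {q : l3PTA.Q} {w t}, l3PTA.Acc q w t → q = true →
        ∃ k, t = gpow k hashT ∧ w 0 = w 1 + k from this h rfl
    intro q w t h
    induction h with
    | @node q w s f c ht hC _ ih =>
      rintro rfl
      cases s with
      | hash => exact ⟨0, node_hash_eq c, hC rfl⟩
      | gam =>
        obtain ⟨⟨⟩, -⟩ | ⟨-, rfl⟩ := ht
        obtain ⟨k, hk, hw⟩ := ih (0 : Fin 1) rfl
        refine ⟨k + 1, by rw [node_gam_eq, hk]; rfl, ?_⟩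
        simp [updW] at hw
        omega
      | sig => nomatch ht.1
  · rintro ⟨k, rfl, hw⟩
    induction k generalizing w with
    | zero =>
      refine .node (A := l3PTA) (s := Sg.hash) (f := ![]) rfl (fun _ => ?_) nofun
      exact hw.trans (add_zero _)
    | succ k ih =>
      refine .node (f := fun _ => (true, some ![0, 1])) (.inr ⟨rfl, rfl⟩) nofun
        (Fin.forall_fin_one.2 (ih ?_))
      simp [updW, hw]
      omega

theorem l3PTA_acc_false_iff {w : Fin 2 → ℕ} {t : GTree Sg arG} :
    l3PTA.Acc false w t ↔
      ∃ n k, t = gpow n (sigT (gpow k hashT) (gpow k hashT)) ∧ w 0 + n = w 1 + k := by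
  refine ⟨fun h => ?_, ?_⟩
  · suffices ∀ {q : l3PTA.Q} {w t}, l3PTA.Acc q w t → q = false →
        ∃ n k, t = gpow n (sigT (gpow k hashT) (gpow k hashT)) ∧ w 0 + n = w 1 + k from
      this h rfl
    intro q w t h
    induction h with
    | @node q w s f c ht _ hc ih =>
      rintro rfl
      cases s with
      | hash => nomatch ht
      | gam =>
        obtain ⟨-, rfl⟩ | ⟨⟨⟩, -⟩ := ht
        obtain ⟨n, k, hn, hw⟩ := ih (0 : Fin 1) rfl
        refine ⟨n + 1, k, by rw [node_gam_eq, hn]; rfl, ?_⟩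
        simp [updW] at hw
        omega
      | sig =>
        obtain ⟨-, rfl⟩ := ht
        obtain ⟨k, hk, hw⟩ := l3PTA_acc_true_iff.1 (hc (0 : Fin 2))
        obtain ⟨k', hk', hw'⟩ := l3PTA_acc_true_iff.1 (hc (1 : Fin 2))
        simp only [updW, add_zero] at hw hw'
        obtain rfl : k = k' := by omega
        exact ⟨0, k, by rw [node_sig_eq, hk, hk']; rfl, by simpa using hw⟩
  · rintro ⟨n, k, rfl, hw⟩
    induction n generalizing w with
    | zero =>
      have hbranch : l3PTA.Acc true (w + 0) (gpow k hashT) :=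
        l3PTA_acc_true_iff.2 ⟨k, rfl, by simpa using hw⟩
      exact .node (f := fun _ => (true, some 0)) ⟨rfl, rfl⟩ nofun
        (Fin.forall_fin_two.2 ⟨hbranch, hbranch⟩)
    | succ n ih =>
      refine .node (f := fun _ => (false, some ![1, 0])) (.inl ⟨rfl, rfl⟩) nofun
        (Fin.forall_fin_one.2 (ih ?_))
      simp [updW]
      omega

theorem l3PTA_lang : l3PTA.Lang = L3 := by
  ext t
  refine l3PTA_acc_false_iff.trans ⟨?_, ?_⟩
  · rintro ⟨n, k, rfl, hnk⟩
    obtain rfl : n = k := by simpa using hnk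
    exact ⟨n, rfl⟩
  · rintro ⟨n, rfl⟩
    exact ⟨n, n, rfl, rfl⟩

theorem linear_ptar_strictly_weaker :
    (∀ (m : ℕ) (A : PTAR Sg arG m), A.IsLinear → ∃ B : PTAR Sg arG m, B.Lang = A.Lang) ∧
    (∃ (m : ℕ) (B : PTAR Sg arG m),
      (∀ (q : B.Q) (s : Sg) (f : Fin (arG s) → B.Q × Option (Fin m → ℕ)),
        B.trans q s f → ∀ i, (f i).2 ≠ none) ∧ B.Lang = L3) ∧
    ¬ ∃ (m : ℕ) (A : PTAR Sg arG m), A.IsLinear ∧ A.Lang = L3 :=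
  ⟨fun _ A _ => ⟨A, rfl⟩, ⟨2, l3PTA, l3PTA_trans_ne_none, l3PTA_lang⟩,
    not_exists_linear_lang_eq_L3⟩
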